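/- Let x, y, z be elements of the graph group G_F. If x ≤ z and y ≤ z, then (x ∧ y)⁻¹x ≤ y⁻¹z. -/

import Mathlib

open Pointwise

namespace GraphGroupPaper

/-- The set of commutator relators: `gᵢ` and `gⱼ` commute for every pair of distinct
`i, j` with `{i,j} ∉ F`. -/
def Rels (k : ℕ) (F : Set (Sym2 (Fin k))) : Set (FreeGroup (Fin k)) :=
  {w | ∃ i j : Fin k, i ≠ j ∧ s(i, j) ∉ F ∧
      w = FreeGroup.of i * FreeGroup.of j * (FreeGroup.of i)⁻¹ * (FreeGroup.of j)⁻¹}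

/-- The graph group `G_F` with generators `g₁, …, g_k` and relations `gᵢgⱼ = gⱼgᵢ`
for all distinct `i, j` with `{i,j} ∉ F`. -/
abbrev Grp (k : ℕ) (F : Set (Sym2 (Fin k))) := PresentedGroup (Rels k F)

/-- The generator `gᵢ` of the graph group. -/
def gen (k : ℕ) (F : Set (Sym2 (Fin k))) (i : Fin k) : Grp k F :=
  PresentedGroup.of i

/-- The group element corresponding to a symbol: `(i, true)` stands for `gᵢ`,
`(i, false)` stands for `gᵢ⁻¹`. -/
def sym (k : ℕ) (F : Set (Sym2 (Fin k))) (α : Fin k × Bool) : Grp k F :=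
  if α.2 then gen k F α.1 else (gen k F α.1)⁻¹

/-- The product of the word `l` of symbols, as an element of the graph group. -/
def wordProd (k : ℕ) (F : Set (Sym2 (Fin k))) (l : List (Fin k × Bool)) : Grp k F :=
  (l.map (sym k F)).prod

/-- `|x|` : the length of a shortest word in the symbols representing `x`. -/
noncomputable def len {k : ℕ} {F : Set (Sym2 (Fin k))} (x : Grp k F) : ℕ :=
  sInf {n | ∃ l : List (Fin k × Bool), wordProd k F l = x ∧ l.length = n}

/-- The partial order on `G_F`:  `x ≤ y` iff `|y| = |x| + |x⁻¹y|`. -/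
def le {k : ℕ} {F : Set (Sym2 (Fin k))} (x y : Grp k F) : Prop :=
  len y = len x + len (x⁻¹ * y)

/-- `m` is the meet `x ∧ y` (greatest lower bound w.r.t. `le`). -/
def IsMeet {k : ℕ} {F : Set (Sym2 (Fin k))} (x y m : Grp k F) : Prop :=
  le m x ∧ le m y ∧ ∀ w, le w x → le w y → le w m

/-- `j` is the (finite) join `x ∨ y` (least upper bound w.r.t. `le`);
`x ∨ y` is finite iff such a `j` exists. -/
def IsJoin {k : ℕ} {F : Set (Sym2 (Fin k))} (x y j : Grp k F) : Prop :=
  le x j ∧ le y j ∧ ∀ w, le x w → le y w → le j w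

/-- `j` is the (finite) join of the set `S`. -/
def IsJoinSet {k : ℕ} {F : Set (Sym2 (Fin k))} (S : Set (Grp k F)) (j : Grp k F) : Prop :=
  (∀ s ∈ S, le s j) ∧ ∀ w, (∀ s ∈ S, le s w) → le j w

/-- `y` is a segment of `a` if `a = x·y·z` for some `x, z`. -/
def Segment {k : ℕ} {F : Set (Sym2 (Fin k))} (y a : Grp k F) : Prop :=
  ∃ x z, a = x * y * z ∧ len a = len x + len y + len z

/-- The left-invariant metric `dist(x,y) = |x⁻¹y|`. -/
noncomputable def dist {k : ℕ} {F : Set (Sym2 (Fin k))} (x y : Grp k F) : ℕ :=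
  len (x⁻¹ * y)

/-- A nonempty set `L` is convex if `x, z ∈ L` and `dist(x,y) + dist(y,z) = dist(x,z)`
imply `y ∈ L`. -/
def ConvexSet {k : ℕ} {F : Set (Sym2 (Fin k))} (L : Set (Grp k F)) : Prop :=
  L.Nonempty ∧ ∀ x z y : Grp k F, x ∈ L → z ∈ L →
    dist x y + dist y z = dist x z → y ∈ L

/-- An ideal: nonempty, downward closed, and closed under finite joins. -/
def IdealSet {k : ℕ} {F : Set (Sym2 (Fin k))} (I : Set (Grp k F)) : Prop :=
  I.Nonempty ∧ (∀ x ∈ I, ∀ y, le y x → y ∈ I) ∧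
    (∀ x ∈ I, ∀ y ∈ I, ∀ j, IsJoin x y j → j ∈ I)

/-- `H` is closed if both `H` and `H⁻¹` are ideals. -/
def ClosedSet {k : ℕ} {F : Set (Sym2 (Fin k))} (H : Set (Grp k F)) : Prop :=
  IdealSet H ∧ IdealSet H⁻¹

/-- `m` is a minimal element of `S` w.r.t. `le`. -/
def MinimalIn {k : ℕ} {F : Set (Sym2 (Fin k))} (S : Set (Grp k F)) (m : Grp k F) : Prop :=
  m ∈ S ∧ ∀ x ∈ S, le x m → x = m

/-- `l` is a reduced (i.e. shortest) word representing `x`. -/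
def MinWord {k : ℕ} {F : Set (Sym2 (Fin k))} (x : Grp k F) (l : List (Fin k × Bool)) : Prop :=
  wordProd k F l = x ∧ l.length = len x

open Classical in
/-- `#_α(x)`: the number of occurrences of the symbol `α` (not counting `α⁻¹`)
in a reduced word representing `x`. -/
noncomputable def symCount {k : ℕ} {F : Set (Sym2 (Fin k))} (α : Fin k × Bool)
    (x : Grp k F) : ℕ :=
  if h : ∃ l, MinWord x l then h.choose.count α else 0

/-- The symbol `α` occurs in `x`. -/
def Occurs {k : ℕ} {F : Set (Sym2 (Fin k))} (α : Fin k × Bool) (x : Grp k F) : Prop :=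
  0 < symCount α x

/-- `α` is a maximal symbol of `x`, i.e. `xα⁻¹ ≤ x`. -/
def MaxSym {k : ℕ} {F : Set (Sym2 (Fin k))} (α : Fin k × Bool) (x : Grp k F) : Prop :=
  le (x * (sym k F α)⁻¹) x

/-- A peak: an element with precisely one maximal symbol. -/
def IsPeak {k : ℕ} {F : Set (Sym2 (Fin k))} (p : Grp k F) : Prop :=
  ∃! α : Fin k × Bool, MaxSym α p

/-- An `α`-peak: a peak whose unique maximal symbol is `α`. -/
def AlphaPeak {k : ℕ} {F : Set (Sym2 (Fin k))} (α : Fin k × Bool) (p : Grp k F) : Prop :=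
  MaxSym α p ∧ ∀ β, MaxSym β p → β = α

/-- The set of generator indices occurring in `b`. -/
def Support {k : ℕ} {F : Set (Sym2 (Fin k))} (b : Grp k F) : Set (Fin k) :=
  {i | Occurs (i, true) b ∨ Occurs (i, false) b}

/-- `b` is connected: the generators occurring in `b` induce a connected subgraph of
the graph `([k], F)`. -/
def Conn {k : ℕ} {F : Set (Sym2 (Fin k))} (b : Grp k F) : Prop :=
  (SimpleGraph.induce (Support b) (SimpleGraph.fromEdgeSet F)).Connected

/-- `b` is cyclically reduced: `b ∧ b⁻¹ = 1`. -/
def CycRed {k : ℕ} {F : Set (Sym2 (Fin k))} (b : Grp k F) : Prop :=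
  IsMeet b b⁻¹ 1


/-!
Two shortest words for the same element of `G_F` differ only by swaps of adjacent commuting
letters. To see this, let `G_F` act on reduced words modulo such swaps, a letter acting by
prepending itself, or by cancelling an initial copy of its inverse if there is one: the action
sends each element to the class of all its shortest words. So `x ≤ y` says that a shortest word
for `x` is, up to swaps, a prefix of one for `y`.

Translating by `m = x ∧ y` reduces the theorem to the case `m = 1`. Then shortest words `a`, `b`
for `x`, `y` extend to shortest words `a ++ u`, `b ++ v` for `z`. These are swap-equivalent, while
no letter can be moved to the front of both `a` and `b`; so each letter of `a` in turn commutes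
with all of `b` and can be moved to the front of `v`. Hence `v` is swap-equivalent to some
`a ++ w`, which says `x ≤ y⁻¹ z`.
-/

section Traces

variable {k : ℕ}

abbrev Letter (k : ℕ) := Fin k × Bool

def Letter.inv (x : Letter k) : Letter k := (x.1, !x.2)

@[simp] theorem Letter.inv_inv (x : Letter k) : x.inv.inv = x := by
  simp [Letter.inv]

variable (F : Set (Sym2 (Fin k)))

def Indep (x y : Letter k) : Prop := x.1 ≠ y.1 ∧ s(x.1, y.1) ∉ F

def SwapStep (l m : List (Letter k)) : Prop :=
  ∃ u v x y, Indep F x y ∧ l = u ++ x :: y :: v ∧ m = u ++ y :: x :: v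

def TraceEq : List (Letter k) → List (Letter k) → Prop := Relation.ReflTransGen (SwapStep F)

def IsInitial (x : Letter k) (l : List (Letter k)) : Prop := ∃ w, TraceEq F l (x :: w)

variable {F} {x y c : Letter k} {l m u v w : List (Letter k)}

theorem Indep.symm (h : Indep F x y) : Indep F y x :=
  ⟨h.1.symm, Sym2.eq_swap (a := x.1) ▸ h.2⟩

theorem not_indep_self (x : Letter k) : ¬ Indep F x x := fun h => h.1 rfl

@[simp] theorem indep_inv_left : Indep F x.inv y ↔ Indep F x y := Iff.rfl

@[simp] theorem indep_inv_right : Indep F x y.inv ↔ Indep F x y := Iff.rfl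

theorem Indep.ne (h : Indep F x y) : x ≠ y := fun e => h.1 (congrArg Prod.fst e)

theorem Indep.ne_inv (h : Indep F x y) : x ≠ y.inv := by
  rintro rfl
  exact h.1 rfl

namespace TraceEq

@[refl] theorem refl (l : List (Letter k)) : TraceEq F l l := Relation.ReflTransGen.refl

theorem trans (h : TraceEq F l m) (h' : TraceEq F m u) : TraceEq F l u :=
  Relation.ReflTransGen.trans h h'

theorem symm (h : TraceEq F l m) : TraceEq F m l := by
  induction h with
  | refl => rfl
  | tail _ hs ih =>
    obtain ⟨u, v, x, y, hxy, rfl, rfl⟩ := hs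
    exact Relation.ReflTransGen.head ⟨u, v, y, x, hxy.symm, rfl, rfl⟩ ih

theorem swap (h : Indep F x y) (l : List (Letter k)) : TraceEq F (x :: y :: l) (y :: x :: l) :=
  Relation.ReflTransGen.single ⟨[], l, x, y, h, rfl, rfl⟩

theorem append_left (c : List (Letter k)) (h : TraceEq F l m) : TraceEq F (c ++ l) (c ++ m) :=
  Relation.ReflTransGen.lift (c ++ ·) (fun _ _ ⟨u, v, x, y, hxy, hl, hm⟩ =>
    ⟨c ++ u, v, x, y, hxy, by simp [hl], by simp [hm]⟩) l m h

theorem append_right (c : List (Letter k)) (h : TraceEq F l m) : TraceEq F (l ++ c) (m ++ c) :=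
  Relation.ReflTransGen.lift (· ++ c) (fun _ _ ⟨u, v, x, y, hxy, hl, hm⟩ =>
    ⟨u, v ++ c, x, y, hxy, by simp [hl], by simp [hm]⟩) l m h

theorem cons (c : Letter k) (h : TraceEq F l m) : TraceEq F (c :: l) (c :: m) :=
  h.append_left [c]

theorem eq_of_invariant {α : Sort*} (f : List (Letter k) → α)
    (hf : ∀ u v x y, Indep F x y → f (u ++ x :: y :: v) = f (u ++ y :: x :: v))
    (h : TraceEq F l m) : f l = f m := by
  induction h with
  | refl => rfl
  | tail _ hs ih =>
    obtain ⟨u, v, x, y, hxy, rfl, rfl⟩ := hs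
    exact ih.trans (hf u v x y hxy)

theorem perm (h : TraceEq F l m) : l.Perm m :=
  Multiset.coe_eq_coe.mp <| h.eq_of_invariant (fun l => (l : Multiset (Letter k)))
    fun u v x y _ => Multiset.coe_eq_coe.mpr ((List.Perm.swap y x v).append_left u)

end TraceEq

def proj (c d : Letter k) (l : List (Letter k)) : List (Letter k) :=
  l.filter (fun e => e = c ∨ e = d)

theorem proj_cons (c d e : Letter k) (l : List (Letter k)) :
    proj c d (e :: l) = if e = c ∨ e = d then e :: proj c d l else proj c d l := by
  by_cases h : e = c ∨ e = d <;> simp [proj, h]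

theorem proj_cons_injective {c d e : Letter k} (h : proj c d (e :: l) = proj c d (e :: m)) :
    proj c d l = proj c d m := by
  rw [proj_cons, proj_cons] at h
  split_ifs at h
  exacts [List.cons_injective h, h]

theorem TraceEq.proj_eq (h : TraceEq F l m) {c d : Letter k} (hcd : ¬ Indep F c d) :
    proj c d l = proj c d m := by
  refine h.eq_of_invariant (proj c d) fun u v x y hxy => ?_
  simp only [proj, List.filter_append]
  congr 1
  by_cases hx : x = c ∨ x = d <;> by_cases hy : y = c ∨ y = d
  · exfalso
    rcases hx with rfl | rfl <;> rcases hy with rfl | rfl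
    exacts [not_indep_self _ hxy, hcd hxy, hcd hxy.symm, not_indep_self _ hxy]
  all_goals simp [hx, hy]

theorem isInitial_of_proj (h : ∀ d, ¬ Indep F c d → (proj c d l).head? = some c) :
    IsInitial F c l := by
  induction l with
  | nil => simpa [proj] using h c (not_indep_self c)
  | cons e t ih =>
    by_cases hec : e = c
    · exact ⟨t, by rw [hec]⟩
    have hce : Indep F c e := by
      by_contra hce
      exact hec (by simpa [proj_cons] using h e hce)
    obtain ⟨w, hw⟩ := ih fun d hcd => by
      have hed : ¬ (e = c ∨ e = d) := by
        rintro (h' | rfl)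
        exacts [hec h', hcd hce]
      simpa [proj_cons, hed] using h d hcd
    exact ⟨e :: w, (hw.cons e).trans (TraceEq.swap hce.symm w)⟩

theorem traceEq_iff_proj_eq :
    TraceEq F l m ↔ ∀ c d, ¬ Indep F c d → proj c d l = proj c d m := by
  refine ⟨fun h c d hcd => h.proj_eq hcd, fun h => ?_⟩
  induction l generalizing m with
  | nil =>
    cases m with
    | nil => rfl
    | cons e t => simpa [proj_cons, proj] using h e e (not_indep_self e)
  | cons c t ih =>
    obtain ⟨w, hw⟩ : IsInitial F c m := isInitial_of_proj fun d hcd => by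
      simp [← h c d hcd, proj_cons]
    have htw : TraceEq F t w := ih fun c' d' hcd =>
      proj_cons_injective ((h c' d' hcd).trans (hw.proj_eq hcd))
    exact (htw.cons c).trans hw.symm

theorem TraceEq.of_cons (h : TraceEq F (c :: l) (c :: m)) : TraceEq F l m :=
  traceEq_iff_proj_eq.mpr fun _ _ hcd => proj_cons_injective (h.proj_eq hcd)

theorem TraceEq.cons_cons_of_ne (h : TraceEq F (x :: u) (y :: v)) (hxy : x ≠ y) :
    Indep F x y ∧ ∃ w, TraceEq F u (y :: w) ∧ TraceEq F v (x :: w) := by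
  have hind : Indep F x y := by
    by_contra hind
    simpa [proj_cons, hxy] using h.proj_eq hind
  obtain ⟨w, hw⟩ : IsInitial F x v := isInitial_of_proj fun d hxd => by
    have hyd : ¬ (y = x ∨ y = d) := by
      rintro (rfl | rfl)
      exacts [hxy rfl, hxd hind]
    have hproj := h.proj_eq hxd
    rw [proj_cons _ _ y, if_neg hyd] at hproj
    simp [← hproj, proj_cons]
  have hyv : TraceEq F (y :: v) (x :: y :: w) := (hw.cons y).trans (TraceEq.swap hind.symm w)
  exact ⟨hind, w, (h.trans hyv).of_cons, hw⟩

theorem isInitial_cons_iff :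
    IsInitial F x (c :: l) ↔ x = c ∨ Indep F x c ∧ IsInitial F x l := by
  constructor
  · rintro ⟨w, hw⟩
    by_cases hxc : x = c
    · exact .inl hxc
    obtain ⟨hcx, w', hw', -⟩ := hw.cons_cons_of_ne (Ne.symm hxc)
    exact .inr ⟨hcx.symm, w', hw'⟩
  · rintro (rfl | ⟨hxc, w, hw⟩)
    · exact ⟨l, .refl _⟩
    · exact ⟨c :: w, (hw.cons c).trans (TraceEq.swap hxc.symm w)⟩

theorem IsInitial.traceEq (h : IsInitial F x l) (hlm : TraceEq F l m) : IsInitial F x m :=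
  let ⟨w, hw⟩ := h; ⟨w, hlm.symm.trans hw⟩

theorem IsInitial.mem (h : IsInitial F x l) : x ∈ l :=
  let ⟨_, hw⟩ := h; hw.perm.symm.subset List.mem_cons_self

theorem isInitial_append (h : IsInitial F x (u ++ m)) :
    IsInitial F x u ∨ (∀ d ∈ u, Indep F x d) ∧ IsInitial F x m := by
  induction u with
  | nil => exact .inr ⟨by simp, h⟩
  | cons c t ih =>
    rcases isInitial_cons_iff.mp h with rfl | ⟨hxc, ht⟩
    · exact .inl ⟨t, .refl _⟩
    rcases ih ht with ht | ⟨hall, hm⟩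
    · exact .inl (isInitial_cons_iff.mpr (.inr ⟨hxc, ht⟩))
    · exact .inr ⟨List.forall_mem_cons.mpr ⟨hxc, hall⟩, hm⟩

theorem traceEq_append_cons (h : ∀ d ∈ u, Indep F x d) :
    TraceEq F (u ++ x :: v) (x :: (u ++ v)) := by
  induction u with
  | nil => rfl
  | cons c t ih =>
    obtain ⟨hxc, ht⟩ := List.forall_mem_cons.mp h
    exact ((ih ht).cons c).trans (TraceEq.swap hxc.symm _)

theorem exists_traceEq_append_of_traceEq_append {a b : List (Letter k)}
    (h : TraceEq F (a ++ u) (b ++ v)) (hab : ∀ x, IsInitial F x a → ¬ IsInitial F x b) :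
    ∃ w, TraceEq F v (a ++ w) := by
  induction a generalizing v with
  | nil => exact ⟨v, .refl _⟩
  | cons x a ih =>
    obtain ⟨hxb, v', hv⟩ : (∀ d ∈ b, Indep F x d) ∧ IsInitial F x v :=
      (isInitial_append ⟨a ++ u, h.symm⟩).resolve_left (hab x ⟨a, .refl _⟩)
    have h' : TraceEq F (a ++ u) (b ++ v') :=
      (h.trans ((hv.append_left b).trans (traceEq_append_cons hxb))).of_cons
    obtain ⟨w, hw⟩ := ih h' fun y hya hyb =>
      hab y (isInitial_cons_iff.mpr (.inr ⟨(hxb y hyb.mem).symm, hya⟩)) hyb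
    exact ⟨w, hv.trans (hw.cons x)⟩

end Traces

section Reduction

variable {k : ℕ} (F : Set (Sym2 (Fin k)))

def Reduced (l : List (Letter k)) : Prop := ∀ u v x, ¬ TraceEq F l (u ++ x :: x.inv :: v)

open Classical in
noncomputable def consCancel (x : Letter k) (l : List (Letter k)) : List (Letter k) :=
  if h : IsInitial F x.inv l then h.choose else x :: l

variable {F} {x y : Letter k} {l m w : List (Letter k)}

theorem reduced_nil : Reduced F ([] : List (Letter k)) := fun u v x h => by
  simpa using h.perm.length_eq

theorem Reduced.of_traceEq_cons (hl : Reduced F l) (h : TraceEq F l (x :: w)) : Reduced F w :=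
  fun u v y hw => hl (x :: u) v y (h.trans (hw.cons x))

theorem Reduced.cons (hl : Reduced F l) (hx : ¬ IsInitial F x.inv l) : Reduced F (x :: l) := by
  intro u v y h
  rcases isInitial_append ⟨l, h.symm⟩ with ⟨u', hu'⟩ | ⟨hxu, hxy⟩
  · exact hl u' v y (h.trans (hu'.append_right _)).of_cons
  rcases isInitial_cons_iff.mp hxy with rfl | ⟨hxy, hx'⟩
  · have hl' : TraceEq F l (u ++ x.inv :: v) := (h.trans (traceEq_append_cons hxu)).of_cons
    exact hx ⟨u ++ v, hl'.trans (traceEq_append_cons fun d hd => indep_inv_left.mpr (hxu d hd))⟩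
  obtain ⟨hxy', v', hv'⟩ := (isInitial_cons_iff.mp hx').resolve_left hxy.ne_inv
  have hall : ∀ d ∈ u ++ [y, y.inv], Indep F x d := by
    simp only [List.mem_append, List.mem_cons, List.not_mem_nil, or_false]
    rintro d (hd | rfl | rfl)
    exacts [hxu d hd, hxy, hxy']
  have hmove := (hv'.append_left (u ++ [y, y.inv])).trans (traceEq_append_cons hall)
  simp only [List.append_assoc, List.cons_append, List.nil_append] at hmove
  exact hl u v' y (h.trans hmove).of_cons

theorem traceEq_inv_cons_consCancel (h : IsInitial F x.inv l) :
    TraceEq F l (x.inv :: consCancel F x l) := by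
  rw [consCancel, dif_pos h]
  exact h.choose_spec

theorem consCancel_of_not_isInitial (h : ¬ IsInitial F x.inv l) : consCancel F x l = x :: l := by
  rw [consCancel, dif_neg h]

theorem consCancel_traceEq (h : TraceEq F l (x.inv :: w)) : TraceEq F (consCancel F x l) w :=
  ((traceEq_inv_cons_consCancel ⟨w, h⟩).symm.trans h).of_cons

theorem TraceEq.consCancel (h : TraceEq F l m) :
    TraceEq F (consCancel F x l) (consCancel F x m) := by
  by_cases hl : IsInitial F x.inv l
  · obtain ⟨w, hw⟩ := hl
    exact (consCancel_traceEq hw).trans (consCancel_traceEq (h.symm.trans hw)).symm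
  · have hm : ¬ IsInitial F x.inv m := fun hm => hl (hm.traceEq h.symm)
    rw [consCancel_of_not_isInitial hl, consCancel_of_not_isInitial hm]
    exact h.cons x

theorem Reduced.consCancel (hl : Reduced F l) : Reduced F (consCancel F x l) := by
  by_cases h : IsInitial F x.inv l
  · exact hl.of_traceEq_cons (traceEq_inv_cons_consCancel h)
  · rw [consCancel_of_not_isInitial h]
    exact hl.cons h

theorem consCancel_inv_consCancel (hl : Reduced F l) :
    TraceEq F (consCancel F x.inv (consCancel F x l)) l := by
  by_cases h : IsInitial F x.inv l
  · have hl' := traceEq_inv_cons_consCancel h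
    have hx : ¬ IsInitial F x.inv.inv (consCancel F x l) := fun ⟨w, hw⟩ =>
      hl [] w x.inv (hl'.trans (hw.cons _))
    rw [consCancel_of_not_isInitial hx]
    exact hl'.symm
  · rw [consCancel_of_not_isInitial h]
    exact consCancel_traceEq (by rw [Letter.inv_inv])

theorem consCancel_comm_of_isInitial (hxy : Indep F x y) (hx : IsInitial F x.inv l) :
    TraceEq F (consCancel F x (consCancel F y l)) (consCancel F y (consCancel F x l)) := by
  obtain ⟨w₀, hw₀⟩ := hx
  have hxl : TraceEq F (consCancel F x l) w₀ := consCancel_traceEq hw₀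
  by_cases hy : IsInitial F y.inv l
  · obtain ⟨u₀, hu₀⟩ := hy
    have hne : x.inv ≠ y.inv := fun h => hxy.ne (by simpa using congrArg Letter.inv h)
    obtain ⟨-, w, hw, hu⟩ := (hw₀.symm.trans hu₀).cons_cons_of_ne hne
    exact (consCancel_traceEq ((consCancel_traceEq hu₀).trans hu)).trans
      (consCancel_traceEq (hxl.trans hw)).symm
  · have hy' : ¬ IsInitial F y.inv (consCancel F x l) := fun ⟨w, hw⟩ =>
      hy ⟨x.inv :: w,
        (hw₀.trans ((hxl.symm.trans hw).cons _)).trans (TraceEq.swap (by simpa) w)⟩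
    rw [consCancel_of_not_isInitial hy, consCancel_of_not_isInitial hy']
    have hyl : TraceEq F (y :: l) (x.inv :: y :: w₀) :=
      (hw₀.cons y).trans (TraceEq.swap (by simpa using hxy.symm) w₀)
    exact (consCancel_traceEq hyl).trans (hxl.symm.cons y)

theorem consCancel_comm (hxy : Indep F x y) (l : List (Letter k)) :
    TraceEq F (consCancel F x (consCancel F y l)) (consCancel F y (consCancel F x l)) := by
  by_cases hx : IsInitial F x.inv l
  · exact consCancel_comm_of_isInitial hxy hx
  by_cases hy : IsInitial F y.inv l
  · exact (consCancel_comm_of_isInitial hxy.symm hy).symm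
  have hx' : ¬ IsInitial F x.inv (y :: l) := by
    rw [isInitial_cons_iff]
    rintro (h | ⟨-, h⟩)
    exacts [hxy.symm.ne_inv (by simp [h]), hx h]
  have hy' : ¬ IsInitial F y.inv (x :: l) := by
    rw [isInitial_cons_iff]
    rintro (h | ⟨-, h⟩)
    exacts [hxy.ne_inv (by simp [h]), hy h]
  rw [consCancel_of_not_isInitial hx, consCancel_of_not_isInitial hy,
    consCancel_of_not_isInitial hx', consCancel_of_not_isInitial hy']
  exact TraceEq.swap hxy l

variable (F) in
def reducedSetoid : Setoid {l : List (Letter k) // Reduced F l} where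
  r l m := TraceEq F l.1 m.1
  iseqv := ⟨fun l => .refl l.1, TraceEq.symm, TraceEq.trans⟩

variable (F) in
abbrev ReducedTrace := Quotient (reducedSetoid F)

variable (F) in
noncomputable def consCancelTrace (x : Letter k) : ReducedTrace F → ReducedTrace F :=
  Quotient.map (fun l => ⟨consCancel F x l.1, l.2.consCancel⟩) fun _ _ h => h.consCancel

theorem consCancelTrace_inv (x : Letter k) (t : ReducedTrace F) :
    consCancelTrace F x.inv (consCancelTrace F x t) = t := by
  induction t using Quotient.ind with
  | _ l => exact Quotient.sound (consCancel_inv_consCancel l.2)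

variable (F) in
noncomputable def letterPerm (x : Letter k) : Equiv.Perm (ReducedTrace F) where
  toFun := consCancelTrace F x
  invFun := consCancelTrace F x.inv
  left_inv := consCancelTrace_inv x
  right_inv t := by simpa using consCancelTrace_inv x.inv t

theorem letterPerm_inv (x : Letter k) : (letterPerm F x)⁻¹ = letterPerm F x.inv :=
  Equiv.ext fun _ => rfl

theorem letterPerm_commute (hxy : Indep F x y) : Commute (letterPerm F x) (letterPerm F y) := by
  refine Equiv.ext fun t => ?_
  induction t using Quotient.ind with
  | _ l => exact Quotient.sound (consCancel_comm hxy l.1)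

end Reduction

section Geodesics

variable {k : ℕ} {F : Set (Sym2 (Fin k))} {x y : Letter k} {l m l₁ l₂ : List (Letter k)}
  {g : Grp k F}

@[simp] theorem wordProd_nil : wordProd k F [] = 1 := rfl

@[simp] theorem wordProd_cons (x : Letter k) (l : List (Letter k)) :
    wordProd k F (x :: l) = sym k F x * wordProd k F l := by
  simp [wordProd]

@[simp] theorem wordProd_append (l₁ l₂ : List (Letter k)) :
    wordProd k F (l₁ ++ l₂) = wordProd k F l₁ * wordProd k F l₂ := by
  simp [wordProd]

@[simp] theorem sym_inv (x : Letter k) : sym k F x.inv = (sym k F x)⁻¹ := by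
  rcases x with ⟨i, _ | _⟩ <;> simp [sym, Letter.inv]

theorem commute_gen {i j : Fin k} (hij : i ≠ j) (hF : s(i, j) ∉ F) :
    Commute (gen k F i) (gen k F j) := by
  have hrel : (PresentedGroup.mk (Rels k F) (FreeGroup.of i * FreeGroup.of j *
      (FreeGroup.of i)⁻¹ * (FreeGroup.of j)⁻¹) : Grp k F) = 1 :=
    (QuotientGroup.eq_one_iff _).mpr (Subgroup.subset_normalClosure ⟨i, j, hij, hF, rfl⟩)
  simp only [map_mul, map_inv, mul_inv_eq_iff_eq_mul] at hrel
  exact hrel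

theorem Indep.commute (h : Indep F x y) : Commute (sym k F x) (sym k F y) := by
  have hc := commute_gen (F := F) h.1 h.2
  rcases x with ⟨i, _ | _⟩ <;> rcases y with ⟨j, _ | _⟩ <;> simp only [sym] <;> simp [hc]

theorem TraceEq.wordProd_eq (h : TraceEq F l m) : wordProd k F l = wordProd k F m :=
  h.eq_of_invariant (wordProd k F) fun u v x y hxy => by
    simp [← mul_assoc, hxy.commute.eq]

theorem exists_wordProd_eq (g : Grp k F) : ∃ l, wordProd k F l = g := by
  induction g using PresentedGroup.induction_on with | H z =>
  induction z using FreeGroup.induction_on with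
  | C1 => exact ⟨[], by simp⟩
  | of i => exact ⟨[(i, true)], by simp [sym, gen]; rfl⟩
  | inv_of i _ => exact ⟨[(i, false)], by simp [sym, gen]; rfl⟩
  | mul a b ha hb =>
    obtain ⟨la, ha⟩ := ha
    obtain ⟨lb, hb⟩ := hb
    exact ⟨la ++ lb, by simp [ha, hb]⟩

theorem len_le (h : wordProd k F l = g) : len g ≤ l.length := Nat.sInf_le ⟨l, h, rfl⟩

theorem exists_minWord (g : Grp k F) : ∃ l, MinWord g l :=
  let ⟨l, hl⟩ := exists_wordProd_eq g
  Nat.sInf_mem (s := {n | ∃ l, wordProd k F l = g ∧ l.length = n}) ⟨l.length, l, hl, rfl⟩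

theorem MinWord.of_traceEq (h : MinWord g l) (hlm : TraceEq F l m) : MinWord g m :=
  ⟨hlm.wordProd_eq ▸ h.1, hlm.perm.length_eq ▸ h.2⟩

theorem len_one : len (1 : Grp k F) = 0 := Nat.le_zero.mp (len_le wordProd_nil)

theorem eq_one_of_len_eq_zero (h : len g = 0) : g = 1 := by
  obtain ⟨l, hl, hlen⟩ := exists_minWord g
  rw [← hl, List.length_eq_zero_iff.mp (hlen.trans h), wordProd_nil]

theorem len_mul_le (g h : Grp k F) : len (g * h) ≤ len g + len h := by
  obtain ⟨l, hl, hlen⟩ := exists_minWord g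
  obtain ⟨m, hm, hmlen⟩ := exists_minWord h
  simpa [hl, hm, hlen, hmlen] using len_le (wordProd_append (F := F) l m)

theorem len_le_len_add_len_inv_mul (g h : Grp k F) : len h ≤ len g + len (g⁻¹ * h) := by
  simpa using len_mul_le g (g⁻¹ * h)

theorem MinWord.append (h : MinWord g (l₁ ++ l₂)) :
    MinWord (wordProd k F l₁) l₁ ∧ MinWord ((wordProd k F l₁)⁻¹ * g) l₂ := by
  obtain ⟨hg, hlen⟩ := h
  have h₁ := len_le (F := F) (l := l₁) rfl
  have h₂ := len_le (g := (wordProd k F l₁)⁻¹ * g) (l := l₂) (by simp [← hg])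
  have h₃ := len_le_len_add_len_inv_mul (wordProd k F l₁) g
  rw [List.length_append] at hlen
  exact ⟨⟨rfl, by omega⟩, ⟨by simp [← hg], by omega⟩⟩

theorem MinWord.reduced (h : MinWord g l) : Reduced F l := by
  intro u v x hl
  have hshort := len_le (g := g) (l := u ++ v) (by rw [← h.1, hl.wordProd_eq]; simp)
  have hlen := hl.perm.length_eq
  simp only [List.length_append, List.length_cons] at hshort hlen
  have := h.2
  omega

variable (F) in
noncomputable def toPerm : Grp k F →* Equiv.Perm (ReducedTrace F) :=
  PresentedGroup.toGroup (f := fun i => letterPerm F (i, true)) <| by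
    rintro _ ⟨i, j, hij, hF, rfl⟩
    simp [(letterPerm_commute (F := F) (x := (i, true)) (y := (j, true)) ⟨hij, hF⟩).eq]

theorem toPerm_sym (x : Letter k) : toPerm F (sym k F x) = letterPerm F x := by
  rcases x with ⟨i, _ | _⟩
  · simpa [sym, gen, toPerm, Letter.inv] using letterPerm_inv (F := F) (i, true)
  · simp [sym, gen, toPerm]

theorem toPerm_apply_nil_of_minWord (h : MinWord g l) :
    toPerm F g ⟦⟨[], reduced_nil⟩⟧ = ⟦⟨l, h.reduced⟩⟧ := by
  induction l generalizing g with
  | nil => simp [← h.1]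
  | cons x t ih =>
    obtain ⟨-, ht⟩ := MinWord.append (l₁ := [x]) h
    have hx : ¬ IsInitial F x.inv t := fun ⟨w, hw⟩ => by
      have hshort := len_le (g := g) (l := w) <| by
        rw [← h.1, wordProd_cons, hw.wordProd_eq]; simp
      have := h.2
      simp [hw.perm.length_eq] at this
      omega
    have hg : g = sym k F x * ((wordProd k F [x])⁻¹ * g) := by simp
    conv_lhs => rw [hg, map_mul, Equiv.Perm.mul_apply, ih ht, toPerm_sym]
    refine Quotient.sound (show TraceEq F (consCancel F x t) (x :: t) from ?_)
    rw [consCancel_of_not_isInitial hx]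

theorem MinWord.traceEq (hl : MinWord g l) (hm : MinWord g m) : TraceEq F l m :=
  Quotient.exact ((toPerm_apply_nil_of_minWord hl).symm.trans (toPerm_apply_nil_of_minWord hm))

end Geodesics

section Order

variable {k : ℕ} {F : Set (Sym2 (Fin k))} {a b c u v w g : Grp k F} {l₁ l₂ : List (Letter k)}

theorem MinWord.le_of_append (h : MinWord g (l₁ ++ l₂)) : le (wordProd k F l₁) g := by
  obtain ⟨⟨-, h₁⟩, ⟨-, h₂⟩⟩ := h.append
  have := h.2
  rw [List.length_append] at this
  unfold le
  omega

theorem MinWord.append_of_le (h : le u v) (h₁ : MinWord u l₁) (h₂ : MinWord (u⁻¹ * v) l₂) :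
    MinWord v (l₁ ++ l₂) :=
  ⟨by simp [h₁.1, h₂.1], by rw [List.length_append, h₁.2, h₂.2, h]⟩

theorem MinWord.sym_le_and_ne_one {x : Letter k} {l : List (Letter k)} (hl : MinWord g l)
    (hx : IsInitial F x l) : le (sym k F x) g ∧ sym k F x ≠ 1 := by
  obtain ⟨p, hp⟩ := hx
  have hxp : MinWord g ([x] ++ p) := hl.of_traceEq hp
  refine ⟨by simpa using hxp.le_of_append, fun h1 => ?_⟩
  have := hxp.append.1.2
  simp [h1, len_one] at this

theorem le.antisymm (huv : le u v) (hvu : le v u) : u = v := by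
  unfold le at huv hvu
  have := eq_one_of_len_eq_zero (g := u⁻¹ * v) (by omega)
  rwa [inv_mul_eq_one] at this

theorem le.inv_mul (huv : le u v) (hvw : le v w) : le (u⁻¹ * v) (u⁻¹ * w) := by
  have htri := len_mul_le (u⁻¹ * v) (v⁻¹ * w)
  have htri' := len_le_len_add_len_inv_mul u w
  simp only [mul_assoc, mul_inv_cancel_left] at htri
  unfold le at huv hvw ⊢
  simp only [mul_inv_rev, inv_inv, mul_assoc, mul_inv_cancel_left]
  omega

theorem le.mul_of_le_inv_mul (huv : le u v) (hw : le w (u⁻¹ * v)) :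
    le u (u * w) ∧ le (u * w) v := by
  have htri := len_mul_le u w
  have htri' := len_le_len_add_len_inv_mul (u * w) v
  unfold le at huv hw ⊢
  simp only [mul_inv_rev, mul_assoc, inv_mul_cancel_left] at htri' hw ⊢
  omega

theorem le_inv_mul_of_le_of_le (hac : le a c) (hbc : le b c)
    (hab : ∀ w, le w a → le w b → w = 1) : le a (b⁻¹ * c) := by
  obtain ⟨la, hla⟩ := exists_minWord a
  obtain ⟨lb, hlb⟩ := exists_minWord b
  obtain ⟨lu, hlu⟩ := exists_minWord (a⁻¹ * c)
  obtain ⟨lv, hlv⟩ := exists_minWord (b⁻¹ * c)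
  have hc : TraceEq F (la ++ lu) (lb ++ lv) :=
    (hla.append_of_le hac hlu).traceEq (hlb.append_of_le hbc hlv)
  obtain ⟨w, hw⟩ := exists_traceEq_append_of_traceEq_append hc fun x hxa hxb =>
    (hla.sym_le_and_ne_one hxa).2
      (hab _ (hla.sym_le_and_ne_one hxa).1 (hlb.sym_le_and_ne_one hxb).1)
  rw [← hla.1]
  exact (hlv.of_traceEq hw).le_of_append

end Order

theorem stmt2_general {k : ℕ} {F : Set (Sym2 (Fin k))} (x y z : Grp k F)
    (hxz : le x z) (hyz : le y z)
    (m : Grp k F) (hm : IsMeet x y m) :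
    le (m⁻¹ * x) (y⁻¹ * z) := by
  obtain ⟨hmx, hmy, hmax⟩ := hm
  have hdisj (w : Grp k F) (hwx : le w (m⁻¹ * x)) (hwy : le w (m⁻¹ * y)) : w = 1 := by
    obtain ⟨hmw, hwx⟩ := hmx.mul_of_le_inv_mul hwx
    obtain ⟨-, hwy⟩ := hmy.mul_of_le_inv_mul hwy
    simpa using (hmax _ hwx hwy).antisymm hmw
  simpa [mul_assoc] using le_inv_mul_of_le_of_le (hmx.inv_mul hxz) (hmy.inv_mul hyz) hdisj

/-- if `x ≤ z` and `y ≤ z`, then `(x ∧ y)⁻¹x ≤ y⁻¹z`. -/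
theorem stmt2 {k : ℕ} (hk : 1 ≤ k) {F : Set (Sym2 (Fin k))} (x y z : Grp k F)
    (hxz : le x z) (hyz : le y z)
    (m : Grp k F) (hm : IsMeet x y m) :
    le (m⁻¹ * x) (y⁻¹ * z) :=
  stmt2_general x y z hxz hyz m hm

end GraphGroupPaper
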